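/- Let σ ∈ (0, 1/2) and ρ ∈ (0,1). Suppose x_k ∈ 𝔹 is a sequence with F(x_k) ≠ 0 for all k, and for each k the direction d_k is either a Newton direction at x_k or d_k = −F(x_k), with ⟪F(x_k), d_k⟫ < 0; let α_k := ρ^{j_k} where j_k is the smallest natural number j such that φ(x_k(ρ^j)) ≤ φ(x_k) + σ ρ^j ⟪F(x_k), d_k⟫ (here x_k(α) := (x_k + α d_k)/‖x_k + α d_k‖), and x_{k+1} := x_k(α_k). Then the sequence {φ(x_k)} is strictly decreasing and {x_k} is bounded. Moreover, if x̄ ∈ 𝔹 is such that some subsequence satisfies x_k → x̄ and d_k → d̄ for some d̄ ∈ E, and ⟪d, F′(x̄) d⟫ > 0 for every nonzero d ∈ E with ⟪x̄, d⟫ = 0, then F(x̄) = 0, i.e. x̄ is a Z-eigenvector of A corresponding to the eigenvalue A x̄^m. -/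

import Mathlib

open scoped RealInnerProductSpace

noncomputable section

/-- Euclidean space `ℝ^n`. -/
abbrev Euc (n : ℕ) : Type := EuclideanSpace ℝ (Fin n)

/-- An `m`-th order tensor on `ℝ^n`, viewed as a continuous `m`-multilinear form. -/
abbrev Tensor (m n : ℕ) : Type := ContinuousMultilinearMap ℝ (fun _ : Fin m => Euc n) ℝ

/-- A tensor is symmetric if it is invariant under every permutation of its arguments. -/
def IsSymmTensor {m n : ℕ} (A : Tensor m n) : Prop :=
  ∀ (e : Equiv.Perm (Fin m)) (v : Fin m → Euc n), A (v ∘ e) = A v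

/-- `A x^m`, the homogeneous form `A (x, …, x)`. -/
def tpow {m n : ℕ} (A : Tensor m n) (x : Euc n) : ℝ := A (fun _ => x)

/-- The last index of `Fin m`. -/
def lastIdx {m : ℕ} (_hm : 2 ≤ m) : Fin m := ⟨m - 1, by omega⟩

/-- The second to last index of `Fin m`. -/
def sndIdx {m : ℕ} (_hm : 2 ≤ m) : Fin m := ⟨m - 2, by omega⟩

lemma sndIdx_ne_lastIdx {m : ℕ} (hm : 2 ≤ m) : sndIdx hm ≠ lastIdx hm := by
  simp only [sndIdx, lastIdx, Fin.mk.injEq, ne_eq]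
  omega

/-- `A x^{m-1}`: the unique vector with `⟪A x^{m-1}, v⟫ = A (x, …, x, v)` for all `v`. -/
def tvec {m n : ℕ} (A : Tensor m n) (hm : 2 ≤ m) (x : Euc n) : Euc n :=
  (InnerProductSpace.toDual ℝ (Euc n)).symm
    (A.toContinuousLinearMap (fun _ => x) (lastIdx hm))

/-- `F(x) = A x^{m-1} - (A x^m) • x`. -/
def Fvec {m n : ℕ} (A : Tensor m n) (hm : 2 ≤ m) (x : Euc n) : Euc n :=
  tvec A hm x - tpow A x • x

/-- `φ(x) = (1/m) A x^m`. -/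
def phi {m n : ℕ} (A : Tensor m n) (x : Euc n) : ℝ := (1 / (m : ℝ)) * tpow A x

/-- Orthogonal projection `P_x d = d - ⟪x, d⟫ x` (for `x` a unit vector). -/
def Pproj {n : ℕ} (x d : Euc n) : Euc n := d - ⟪x, d⟫ • x

/-- `x(α) = (x + α d)/‖x + α d‖`, the projection of `x + α d` onto the unit sphere. -/
def xcur {n : ℕ} (x d : Euc n) (α : ℝ) : Euc n := ‖x + α • d‖⁻¹ • (x + α • d)

/-- `w(x, d)`: the unique vector with `⟪w(x, d), v⟫ = A (x, …, x, d, v)` for all `v`. -/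
def wvec {m n : ℕ} (A : Tensor m n) (hm : 2 ≤ m) (x d : Euc n) : Euc n :=
  (InnerProductSpace.toDual ℝ (Euc n)).symm
    (A.toContinuousLinearMap (Function.update (fun _ => x) (sndIdx hm) d) (lastIdx hm))

/-- `A (x, …, x, d, d)`. -/
def A2 {m n : ℕ} (A : Tensor m n) (hm : 2 ≤ m) (x d : Euc n) : ℝ :=
  A (Function.update (Function.update (fun _ => x) (sndIdx hm) d) (lastIdx hm) d)

lemma wvec_add {m n : ℕ} (A : Tensor m n) (hm : 2 ≤ m) (x d₁ d₂ : Euc n) :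
    wvec A hm x (d₁ + d₂) = wvec A hm x d₁ + wvec A hm x d₂ := by
  unfold wvec
  rw [← map_add]
  congr 1
  ext v
  simp only [ContinuousMultilinearMap.toContinuousLinearMap_apply, ContinuousLinearMap.add_apply]
  rw [Function.update_comm (sndIdx_ne_lastIdx hm), Function.update_comm (sndIdx_ne_lastIdx hm),
    Function.update_comm (sndIdx_ne_lastIdx hm)]
  exact A.map_update_add _ _ _ _

lemma wvec_smul {m n : ℕ} (A : Tensor m n) (hm : 2 ≤ m) (x : Euc n) (c : ℝ) (d : Euc n) :
    wvec A hm x (c • d) = c • wvec A hm x d := by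
  unfold wvec
  rw [← map_smul]
  congr 1
  ext v
  simp only [ContinuousMultilinearMap.toContinuousLinearMap_apply,
    ContinuousLinearMap.smul_apply, smul_eq_mul]
  rw [Function.update_comm (sndIdx_ne_lastIdx hm), Function.update_comm (sndIdx_ne_lastIdx hm)]
  exact A.map_update_smul _ _ _ _

/-- The Jacobian `F'(x) d = (m-1) w(x,d) - (A x^m) d - m ⟪A x^{m-1}, d⟫ x`. -/
def FderivL {m n : ℕ} (A : Tensor m n) (hm : 2 ≤ m) (x : Euc n) : Euc n →L[ℝ] Euc n :=
  LinearMap.toContinuousLinearMap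
  { toFun := fun d =>
      ((m : ℝ) - 1) • wvec A hm x d - tpow A x • d - ((m : ℝ) * ⟪tvec A hm x, d⟫) • x
    map_add' := by
      intro d₁ d₂
      try simp only
      rw [wvec_add, inner_add_right]
      module
    map_smul' := by
      intro c d
      simp only [RingHom.id_apply]
      rw [wvec_smul, inner_smul_right]
      module }

/-- A Newton direction at `x`: `⟪x, d⟫ = 0` and `P_x (F'(x) d + F(x)) = 0`. -/
def NewtonDir {m n : ℕ} (A : Tensor m n) (hm : 2 ≤ m) (x d : Euc n) : Prop :=
  ⟪x, d⟫ = 0 ∧ Pproj x (FderivL A hm x d + Fvec A hm x) = 0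

/-- The residual function `θ(x) = (1/2)‖F(x)‖²`. -/
def theta {m n : ℕ} (A : Tensor m n) (hm : 2 ≤ m) (x : Euc n) : ℝ :=
  (1 / 2) * ‖Fvec A hm x‖ ^ 2

/-- Assumption (A): second-order sufficient condition at the KKT point `x̄`. -/
def AssumpA {m n : ℕ} (A : Tensor m n) (hm : 2 ≤ m) (xb : Euc n) (lam : ℝ) : Prop :=
  ‖xb‖ = 1 ∧ tvec A hm xb = lam • xb ∧ lam = tpow A xb ∧
    ∀ d : Euc n, d ≠ 0 → ⟪xb, d⟫ = 0 →
      0 < ((m : ℝ) - 1) * A2 A hm xb d - lam * ‖d‖ ^ 2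

end


/-!
The Armijo condition makes `φ(x k)` strictly decreasing, and since `φ` is bounded on the
sphere the decrements `ρ ^ j k * ⟪F(x k), d k⟫` tend to `0`. Along a subsequence with
`x k → x̄`, `d k → d̄`, if `⟪F(x̄), d̄⟫ < 0` the accepted steps tend to `0`, so the previous trial
step `ρ ^ (j k - 1)` was rejected; by the mean value theorem for `α ↦ φ(x(α))`, whose derivative
is `⟪F(x(α)), d⟫ / ‖x + α d‖`, this yields `σ ⟪F(x̄), d̄⟫ ≤ ⟪F(x̄), d̄⟫`, impossible for `σ < 1`.
Hence `⟪F(x̄), d̄⟫ = 0`. Being a Newton direction and being `-F` are closed conditions, so `d̄`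
is one of the two at `x̄`, and in either case (the first one through the second-order
condition) `F(x̄) = 0`.
-/

open Filter Topology

lemma EuclideanSpace.continuous_of_continuous_inner {ι X : Type*} [Fintype ι] [DecidableEq ι]
    [TopologicalSpace X] {f : X → EuclideanSpace ℝ ι}
    (h : ∀ v, Continuous fun x => ⟪f x, v⟫) : Continuous f := by
  refine (PiLp.continuous_toLp 2 _).comp (continuous_pi fun i => ?_)
  simpa [EuclideanSpace.inner_single_right] using h (EuclideanSpace.single i 1)

lemma HasDerivAt.norm_inv_smul {E : Type*} [NormedAddCommGroup E] [InnerProductSpace ℝ E]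
    {y : ℝ → E} {y' : E} {t : ℝ} (hy : HasDerivAt y y' t) (h0 : y t ≠ 0) :
    HasDerivAt (fun s => ‖y s‖⁻¹ • y s)
      (‖y t‖⁻¹ • y' - (⟪y t, y'⟫ / ‖y t‖ ^ 3) • y t) t := by
  have hr : 0 < ‖y t‖ := norm_pos_iff.mpr h0
  have hnorm : HasDerivAt (fun s => ‖y s‖) (⟪y t, y'⟫ / ‖y t‖) t := by
    have h := hy.norm_sq.sqrt (pow_pos hr 2).ne'
    simp only [Real.sqrt_sq (norm_nonneg _)] at h
    convert h using 1
    ring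
  convert (hnorm.fun_inv hr.ne').fun_smul hy using 1
  rw [sub_eq_add_neg, ← neg_smul]
  congr 2
  field_simp

lemma add_smul_ne_zero_of_inner_eq_zero {E : Type*} [NormedAddCommGroup E]
    [InnerProductSpace ℝ E] {x d : E} (hx : x ≠ 0) (hxd : ⟪x, d⟫ = 0) (α : ℝ) :
    x + α • d ≠ 0 := by
  intro h
  have : ⟪x, x + α • d⟫ = 0 := by rw [h, inner_zero_right]
  rw [inner_add_right, real_inner_smul_right, hxd, mul_zero, add_zero,
    real_inner_self_eq_norm_sq] at this
  exact hx (norm_eq_zero.mp (pow_eq_zero_iff two_ne_zero |>.mp this))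

section Tensor

variable {m n : ℕ} (A : Tensor m n) (hm : 2 ≤ m)

lemma inner_tvec (x v : Euc n) :
    ⟪tvec A hm x, v⟫ = A (Function.update (fun _ => x) (lastIdx hm) v) := by
  rw [tvec, InnerProductSpace.toDual_symm_apply]
  rfl

lemma inner_wvec (x d v : Euc n) :
    ⟪wvec A hm x d, v⟫ =
      A (Function.update (Function.update (fun _ => x) (sndIdx hm) d) (lastIdx hm) v) := by
  rw [wvec, InnerProductSpace.toDual_symm_apply]
  rfl

lemma inner_tvec_self (x : Euc n) : ⟪tvec A hm x, x⟫ = tpow A x := by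
  rw [inner_tvec, Function.update_eq_self]
  rfl

lemma FderivL_apply (x d : Euc n) : FderivL A hm x d =
    ((m : ℝ) - 1) • wvec A hm x d - tpow A x • d - ((m : ℝ) * ⟪tvec A hm x, d⟫) • x :=
  rfl

lemma inner_Fvec_eq_zero {x : Euc n} (hx : ‖x‖ = 1) : ⟪x, Fvec A hm x⟫ = 0 := by
  rw [Fvec, inner_sub_right, real_inner_smul_right, real_inner_comm, inner_tvec_self,
    real_inner_self_eq_norm_sq, hx]
  ring

lemma neg_norm_le_tpow {x : Euc n} (hx : ‖x‖ = 1) : -‖A‖ ≤ tpow A x := by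
  have h := A.le_opNorm fun _ => x
  simp only [hx, Finset.prod_const_one, mul_one] at h
  exact neg_le_of_abs_le h

@[fun_prop]
lemma continuous_tpow : Continuous (tpow A) := by
  unfold tpow; fun_prop

@[fun_prop]
lemma continuous_tvec : Continuous (tvec A hm) :=
  EuclideanSpace.continuous_of_continuous_inner fun v => by
    simp only [inner_tvec]
    fun_prop

lemma continuous_wvec : Continuous fun p : Euc n × Euc n => wvec A hm p.1 p.2 :=
  EuclideanSpace.continuous_of_continuous_inner fun v => by
    simp only [inner_wvec]
    fun_prop

@[fun_prop]
lemma continuous_Fvec : Continuous (Fvec A hm) := by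
  unfold Fvec; fun_prop

lemma continuous_FderivL : Continuous fun p : Euc n × Euc n => FderivL A hm p.1 p.2 := by
  have := continuous_wvec A hm
  simp only [FderivL_apply]
  fun_prop

end Tensor

section Symmetric

variable {m n : ℕ} {A : Tensor m n} (hm : 2 ≤ m)

lemma IsSymmTensor.apply_update_const (hA : IsSymmTensor A) (x v : Euc n) (i : Fin m) :
    A (Function.update (fun _ => x) i v) = ⟪tvec A hm x, v⟫ := by
  rw [inner_tvec, ← hA (Equiv.swap (lastIdx hm) i), Function.update_comp_equiv]
  simp [Function.comp_def]

lemma IsSymmTensor.hasFDerivAt_tpow (hA : IsSymmTensor A) (x : Euc n) :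
    HasFDerivAt (tpow A) ((m : ℝ) • innerSL ℝ (tvec A hm x)) x := by
  have hdiag : HasFDerivAt (fun y : Euc n => fun _ : Fin m => y)
      (ContinuousLinearMap.pi fun _ => ContinuousLinearMap.id ℝ (Euc n)) x :=
    (ContinuousLinearMap.pi fun _ => ContinuousLinearMap.id ℝ (Euc n)).hasFDerivAt
  refine ((A.hasFDerivAt fun _ => x).comp x hdiag).congr_fderiv
    (ContinuousLinearMap.ext fun v => ?_)
  simp [ContinuousMultilinearMap.linearDeriv_apply, hA.apply_update_const hm]

lemma IsSymmTensor.hasFDerivAt_phi (hA : IsSymmTensor A) (x : Euc n) :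
    HasFDerivAt (phi A) (innerSL ℝ (tvec A hm x)) x := by
  have hm0 : (m : ℝ) ≠ 0 := by positivity
  have h := (hA.hasFDerivAt_tpow hm x).const_mul (1 / (m : ℝ))
  rwa [smul_smul, one_div_mul_cancel hm0, one_smul] at h

end Symmetric

section Curve

variable {m n : ℕ} (A : Tensor m n) (hm : 2 ≤ m)

lemma xcur_zero {x : Euc n} (hx : ‖x‖ = 1) (d : Euc n) : xcur x d 0 = x := by
  simp [xcur, hx]

noncomputable def curveSlope (x d : Euc n) (α : ℝ) : ℝ :=
  ‖x + α • d‖⁻¹ * ⟪Fvec A hm (xcur x d α), d⟫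

variable {A}

lemma IsSymmTensor.hasDerivAt_phi_xcur (hA : IsSymmTensor A) {x d : Euc n} {α : ℝ}
    (h0 : x + α • d ≠ 0) :
    HasDerivAt (fun β => phi A (xcur x d β)) (curveSlope A hm x d α) α := by
  have hline : HasDerivAt (fun β : ℝ => x + β • d) d α := by
    simpa using ((hasDerivAt_id α).smul_const d).const_add x
  have h := (hA.hasFDerivAt_phi hm (xcur x d α)).comp_hasDerivAt α (hline.norm_inv_smul h0)
  refine h.congr_deriv ?_
  rw [curveSlope]
  set r := ‖x + α • d‖
  have hr : r ≠ 0 := norm_ne_zero_iff.mpr h0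
  have hy : x + α • d = r • xcur x d α := (smul_inv_smul₀ hr _).symm
  have hyd : ⟪x + α • d, d⟫ = r * ⟪xcur x d α, d⟫ := by rw [hy, real_inner_smul_left]
  have hty : ⟪tvec A hm (xcur x d α), x + α • d⟫ = r * tpow A (xcur x d α) := by
    rw [hy, inner_smul_right, inner_tvec_self]
  simp only [innerSL_apply_apply, inner_sub_right, inner_smul_right, Fvec,
    inner_sub_left, real_inner_smul_left, hyd, hty]
  field_simp

lemma IsSymmTensor.exists_lt_curveSlope (hA : IsSymmTensor A) {x d : Euc n} (hx : ‖x‖ = 1)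
    (hxd : ⟪x, d⟫ = 0) {σ t β : ℝ} (hβ : 0 < β)
    (hfail : ¬ phi A (xcur x d β) ≤ phi A x + σ * β * t) :
    ∃ ξ ∈ Set.Ioo 0 β, σ * t < curveSlope A hm x d ξ := by
  have hx0 : x ≠ 0 := norm_ne_zero_iff.mp (by rw [hx]; exact one_ne_zero)
  have hderiv := fun α =>
    hA.hasDerivAt_phi_xcur hm (add_smul_ne_zero_of_inner_eq_zero hx0 hxd α)
  obtain ⟨ξ, hξ, hslope⟩ := exists_hasDerivAt_eq_slope _ _ hβ
    (fun α _ => (hderiv α).continuousAt.continuousWithinAt) (fun α _ => hderiv α)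
  refine ⟨ξ, hξ, ?_⟩
  rw [hslope, xcur_zero hx, sub_zero, lt_div_iff₀ hβ]
  linarith

lemma tendsto_curveSlope {ι : Type*} {l : Filter ι} {x d : ι → Euc n} {ξ : ι → ℝ}
    {x₀ d₀ : Euc n} (hx₀ : ‖x₀‖ = 1) (hx : Tendsto x l (𝓝 x₀)) (hd : Tendsto d l (𝓝 d₀))
    (hξ : Tendsto ξ l (𝓝 0)) :
    Tendsto (fun i => curveSlope A hm (x i) (d i) (ξ i)) l (𝓝 ⟪Fvec A hm x₀, d₀⟫) := by
  have hy : Tendsto (fun i => x i + ξ i • d i) l (𝓝 x₀) := by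
    simpa using hx.add (hξ.smul hd)
  have hr : Tendsto (fun i => ‖x i + ξ i • d i‖⁻¹) l (𝓝 1) := by
    simpa [hx₀] using hy.norm.inv₀ (by simp [hx₀])
  have hu : Tendsto (fun i => xcur (x i) (d i) (ξ i)) l (𝓝 x₀) := by
    have h := hr.smul hy
    rwa [one_smul] at h
  have h := hr.mul ((((continuous_Fvec A hm).tendsto x₀).comp hu).inner hd)
  rwa [one_mul] at h

end Curve

section NewtonDirection

variable {m n : ℕ} {A : Tensor m n} {hm : 2 ≤ m}

lemma isClosed_newtonDir_or_eq_neg_Fvec :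
    IsClosed {p : Euc n × Euc n | NewtonDir A hm p.1 p.2 ∨ p.2 = -Fvec A hm p.1} := by
  have := continuous_FderivL A hm
  refine .union (.inter (isClosed_eq (by fun_prop) (by fun_prop)) ?_)
    (isClosed_eq (by fun_prop) (by fun_prop))
  exact isClosed_eq (by unfold Pproj; fun_prop) continuous_const

/-- Testing `P_x (F'(x) d + F(x)) = 0` against `d` gives `⟪d, F'(x) d⟫ = 0`, so `d = 0`;
then `F(x)` is a multiple of `x`, to which it is orthogonal. -/
lemma Fvec_eq_zero_of_newtonDir {x d : Euc n} (hx : ‖x‖ = 1) (hN : NewtonDir A hm x d)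
    (hFd : ⟪Fvec A hm x, d⟫ = 0)
    (hpos : ∀ v : Euc n, v ≠ 0 → ⟪x, v⟫ = 0 → 0 < ⟪v, FderivL A hm x v⟫) :
    Fvec A hm x = 0 := by
  obtain ⟨hxd, hP⟩ := hN
  set w := FderivL A hm x d + Fvec A hm x
  have hw : w = ⟪x, w⟫ • x := sub_eq_zero.mp hP
  have hd : d = 0 := by
    by_contra hd0
    have hdw : ⟪d, w⟫ = 0 := by
      rw [hw, real_inner_smul_right, real_inner_comm x d, hxd, mul_zero]
    rw [inner_add_right, real_inner_comm (Fvec A hm x), hFd, add_zero] at hdw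
    exact (hpos d hd0 hxd).ne' hdw
  have hFx : Fvec A hm x = ⟪x, Fvec A hm x⟫ • x := by simpa [w, hd] using hw
  rw [hFx, inner_Fvec_eq_zero A hm hx, zero_smul]

end NewtonDirection

structure IsNewtonArmijoSeq {m n : ℕ} (A : Tensor m n) (hm : 2 ≤ m) (σ ρ : ℝ)
    (x d : ℕ → Euc n) (j : ℕ → ℕ) : Prop where
  norm_eq_one : ∀ k, ‖x k‖ = 1
  newtonDir_or : ∀ k, NewtonDir A hm (x k) (d k) ∨ d k = -Fvec A hm (x k)
  descent : ∀ k, ⟪Fvec A hm (x k), d k⟫ < 0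
  armijo : ∀ k, phi A (xcur (x k) (d k) (ρ ^ j k)) ≤
    phi A (x k) + σ * ρ ^ j k * ⟪Fvec A hm (x k), d k⟫
  armijo_fails : ∀ k, ∀ i < j k, ¬ (phi A (xcur (x k) (d k) (ρ ^ i)) ≤
    phi A (x k) + σ * ρ ^ i * ⟪Fvec A hm (x k), d k⟫)
  succ : ∀ k, x (k + 1) = xcur (x k) (d k) (ρ ^ j k)

namespace IsNewtonArmijoSeq

variable {m n : ℕ} {A : Tensor m n} {hm : 2 ≤ m} {σ ρ : ℝ} {x d : ℕ → Euc n} {j : ℕ → ℕ}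

lemma inner_eq_zero (h : IsNewtonArmijoSeq A hm σ ρ x d j) (k : ℕ) : ⟪x k, d k⟫ = 0 := by
  rcases h.newtonDir_or k with hN | hd
  · exact hN.1
  · rw [hd, inner_neg_right, inner_Fvec_eq_zero A hm (h.norm_eq_one k), neg_zero]

lemma phi_succ_le (h : IsNewtonArmijoSeq A hm σ ρ x d j) (k : ℕ) :
    phi A (x (k + 1)) ≤ phi A (x k) + σ * ρ ^ j k * ⟪Fvec A hm (x k), d k⟫ :=
  h.succ k ▸ h.armijo k

lemma armijo_decrement_neg (h : IsNewtonArmijoSeq A hm σ ρ x d j) (hσ : 0 < σ) (hρ : 0 < ρ)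
    (k : ℕ) : σ * ρ ^ j k * ⟪Fvec A hm (x k), d k⟫ < 0 :=
  mul_neg_of_pos_of_neg (by positivity) (h.descent k)

lemma strictAnti_phi (h : IsNewtonArmijoSeq A hm σ ρ x d j) (hσ : 0 < σ) (hρ : 0 < ρ) :
    StrictAnti fun k => phi A (x k) :=
  strictAnti_nat_of_succ_lt fun k => by
    linarith [h.phi_succ_le k, h.armijo_decrement_neg hσ hρ k]

lemma tendsto_step_mul_inner_Fvec (h : IsNewtonArmijoSeq A hm σ ρ x d j) (hσ : 0 < σ)
    (hρ : 0 < ρ) :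
    Tendsto (fun k => ρ ^ j k * ⟪Fvec A hm (x k), d k⟫) atTop (𝓝 0) := by
  have hbdd : BddBelow (Set.range fun k => phi A (x k)) := by
    refine ⟨1 / m * -‖A‖, ?_⟩
    rintro _ ⟨k, rfl⟩
    exact mul_le_mul_of_nonneg_left (neg_norm_le_tpow A (h.norm_eq_one k)) (by positivity)
  have hconv := tendsto_atTop_ciInf (h.strictAnti_phi hσ hρ).antitone hbdd
  have hdiff : Tendsto (fun k => phi A (x k) - phi A (x (k + 1))) atTop (𝓝 0) := by
    simpa using hconv.sub (hconv.comp (tendsto_add_atTop_nat 1))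
  have hdec : Tendsto (fun k => -(σ * ρ ^ j k * ⟪Fvec A hm (x k), d k⟫)) atTop (𝓝 0) :=
    squeeze_zero (fun k => (neg_pos.mpr (h.armijo_decrement_neg hσ hρ k)).le)
      (fun k => by linarith [h.phi_succ_le k]) hdiff
  simpa [mul_assoc, hσ.ne'] using hdec.neg.const_mul σ⁻¹

lemma exists_lt_curveSlope (h : IsNewtonArmijoSeq A hm σ ρ x d j) (hA : IsSymmTensor A)
    (hρ : 0 < ρ) {k : ℕ} (hk : j k ≠ 0) :
    ∃ ξ ∈ Set.Ioo 0 (ρ ^ j k / ρ),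
      σ * ⟪Fvec A hm (x k), d k⟫ < curveSlope A hm (x k) (d k) ξ := by
  have hprev : ρ ^ (j k - 1) = ρ ^ j k / ρ := by
    rw [eq_div_iff hρ.ne', ← pow_succ, Nat.sub_add_cancel (Nat.pos_of_ne_zero hk)]
  rw [← hprev]
  exact hA.exists_lt_curveSlope hm (h.norm_eq_one k) (h.inner_eq_zero k) (pow_pos hρ _)
    (h.armijo_fails k _ (by omega))

lemma inner_Fvec_eq_zero_of_tendsto (h : IsNewtonArmijoSeq A hm σ ρ x d j)
    (hA : IsSymmTensor A) (hσ : 0 < σ) (hσ₁ : σ < 1) (hρ : 0 < ρ) {x₀ d₀ : Euc n}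
    (hx₀ : ‖x₀‖ = 1) {s : ℕ → ℕ} (hs : StrictMono s)
    (hxs : Tendsto (fun i => x (s i)) atTop (𝓝 x₀))
    (hds : Tendsto (fun i => d (s i)) atTop (𝓝 d₀)) :
    ⟪Fvec A hm x₀, d₀⟫ = 0 := by
  set t₀ := ⟪Fvec A hm x₀, d₀⟫
  have ht : Tendsto (fun i => ⟪Fvec A hm (x (s i)), d (s i)⟫) atTop (𝓝 t₀) :=
    (((continuous_Fvec A hm).tendsto x₀).comp hxs).inner hds
  have ht₀ : t₀ ≤ 0 := le_of_tendsto' ht fun i => (h.descent _).le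
  by_contra hne
  have hstep : Tendsto (fun i => ρ ^ j (s i)) atTop (𝓝 0) := by
    have hlim := ((h.tendsto_step_mul_inner_Fvec hσ hρ).comp hs.tendsto_atTop).div ht hne
    rw [zero_div] at hlim
    exact hlim.congr fun i => mul_div_cancel_right₀ _ (h.descent _).ne
  have hj : ∀ᶠ i in atTop, j (s i) ≠ 0 :=
    (hstep.eventually_lt_const one_pos).mono fun i hi hj => by simp [hj] at hi
  obtain ⟨ξ, hξ⟩ := (hj.mono fun i hi => h.exists_lt_curveSlope hA hρ hi).choice
  have hξ₀ : Tendsto ξ atTop (𝓝 0) :=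
    tendsto_of_tendsto_of_tendsto_of_le_of_le' tendsto_const_nhds
      (by simpa using hstep.div_const ρ) (hξ.mono fun i hi => hi.1.1.le)
      (hξ.mono fun i hi => hi.1.2.le)
  have hle : σ * t₀ ≤ t₀ :=
    le_of_tendsto_of_tendsto (ht.const_mul σ) (tendsto_curveSlope hm hx₀ hxs hds hξ₀)
      (hξ.mono fun i hi => hi.2.le)
  nlinarith [lt_of_le_of_ne ht₀ hne]

end IsNewtonArmijoSeq

theorem stmt12_general {m n : ℕ} (hm : 2 ≤ m) (A : Tensor m n) (hA : IsSymmTensor A)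
    (σ ρ : ℝ) (hσ : σ ∈ Set.Ioo (0 : ℝ) (1 / 2)) (hρ : ρ ∈ Set.Ioo (0 : ℝ) 1)
    (x d : ℕ → Euc n) (hxS : ∀ k, ‖x k‖ = 1)
    (hdk : ∀ k, NewtonDir A hm (x k) (d k) ∨ d k = -Fvec A hm (x k))
    (hdesc : ∀ k, ⟪Fvec A hm (x k), d k⟫ < 0)
    (j : ℕ → ℕ)
    (hj : ∀ k, phi A (xcur (x k) (d k) (ρ ^ j k)) ≤
        phi A (x k) + σ * ρ ^ j k * ⟪Fvec A hm (x k), d k⟫)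
    (hjmin : ∀ k, ∀ i < j k, ¬ (phi A (xcur (x k) (d k) (ρ ^ i)) ≤
        phi A (x k) + σ * ρ ^ i * ⟪Fvec A hm (x k), d k⟫))
    (hstep : ∀ k, x (k + 1) = xcur (x k) (d k) (ρ ^ j k)) :
    (StrictAnti fun k => phi A (x k)) ∧ (∃ M : ℝ, ∀ k, ‖x k‖ ≤ M) ∧
    ∀ xb db : Euc n, ‖xb‖ = 1 →
      (∃ s : ℕ → ℕ, StrictMono s ∧
        Filter.Tendsto (fun i => x (s i)) Filter.atTop (nhds xb) ∧
        Filter.Tendsto (fun i => d (s i)) Filter.atTop (nhds db)) →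
      (∀ dd : Euc n, dd ≠ 0 → ⟪xb, dd⟫ = 0 → 0 < ⟪dd, FderivL A hm xb dd⟫) →
      Fvec A hm xb = 0 ∧ tvec A hm xb = tpow A xb • xb := by
  have h : IsNewtonArmijoSeq A hm σ ρ x d j := ⟨hxS, hdk, hdesc, hj, hjmin, hstep⟩
  refine ⟨h.strictAnti_phi hσ.1 hρ.1, ⟨1, fun k => (hxS k).le⟩, ?_⟩
  rintro xb db hxb ⟨s, hs, hxs, hds⟩ hpos
  have hFd : ⟪Fvec A hm xb, db⟫ = 0 :=
    h.inner_Fvec_eq_zero_of_tendsto hA hσ.1 (by linarith [hσ.2]) hρ.1 hxb hs hxs hds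
  have hlim : NewtonDir A hm xb db ∨ db = -Fvec A hm xb :=
    isClosed_newtonDir_or_eq_neg_Fvec.mem_of_tendsto (hxs.prodMk_nhds hds)
      (Eventually.of_forall fun i => hdk (s i))
  have hF : Fvec A hm xb = 0 := by
    rcases hlim with hN | hneg
    · exact Fvec_eq_zero_of_newtonDir hxb hN hFd hpos
    · rwa [hneg, inner_neg_right, neg_eq_zero, inner_self_eq_zero] at hFd
  exact ⟨hF, sub_eq_zero.mp hF⟩

/-- global convergence of the globalized Newton method: the function values
strictly decrease, the iterates are bounded, and any subsequential limit at which the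
second-order condition holds is a `Z`-eigenvector. -/
theorem stmt12 {m n : ℕ} (hn : 1 ≤ n) (hm : 2 ≤ m) (A : Tensor m n) (hA : IsSymmTensor A)
    (σ ρ : ℝ) (hσ : σ ∈ Set.Ioo (0 : ℝ) (1 / 2)) (hρ : ρ ∈ Set.Ioo (0 : ℝ) 1)
    (x d : ℕ → Euc n) (hxS : ∀ k, ‖x k‖ = 1) (hFk : ∀ k, Fvec A hm (x k) ≠ 0)
    (hdk : ∀ k, NewtonDir A hm (x k) (d k) ∨ d k = -Fvec A hm (x k))
    (hdesc : ∀ k, ⟪Fvec A hm (x k), d k⟫ < 0)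
    (j : ℕ → ℕ)
    (hj : ∀ k, phi A (xcur (x k) (d k) (ρ ^ j k)) ≤
        phi A (x k) + σ * ρ ^ j k * ⟪Fvec A hm (x k), d k⟫)
    (hjmin : ∀ k, ∀ i < j k, ¬ (phi A (xcur (x k) (d k) (ρ ^ i)) ≤
        phi A (x k) + σ * ρ ^ i * ⟪Fvec A hm (x k), d k⟫))
    (hstep : ∀ k, x (k + 1) = xcur (x k) (d k) (ρ ^ j k)) :
    (StrictAnti fun k => phi A (x k)) ∧ (∃ M : ℝ, ∀ k, ‖x k‖ ≤ M) ∧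
    ∀ xb db : Euc n, ‖xb‖ = 1 →
      (∃ s : ℕ → ℕ, StrictMono s ∧
        Filter.Tendsto (fun i => x (s i)) Filter.atTop (nhds xb) ∧
        Filter.Tendsto (fun i => d (s i)) Filter.atTop (nhds db)) →
      (∀ dd : Euc n, dd ≠ 0 → ⟪xb, dd⟫ = 0 → 0 < ⟪dd, FderivL A hm xb dd⟫) →
      Fvec A hm xb = 0 ∧ tvec A hm xb = tpow A xb • xb :=
  stmt12_general hm A hA σ ρ hσ hρ x d hxS hdk hdesc j hj hjmin hstep
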